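/- The image of the contraction map induced by W^{⊗2} against party A (i.e., the support of Tr_A |W^{⊗2}⟩⟨W^{⊗2}|) is the 4-dimensional subspace of ℂ⁴⊗ℂ⁴ spanned by |00⟩, |01⟩+|10⟩, |02⟩+|20⟩, and |03⟩+|12⟩+|21⟩+|30⟩. -/

import Mathlib

open TensorProduct

/-- Tripartite tensor rank: minimal number of product vectors summing to `ψ`. -/
noncomputable def tRank {A B C : Type*} [AddCommGroup A] [Module ℂ A]
    [AddCommGroup B] [Module ℂ B] [AddCommGroup C] [Module ℂ C]
    (ψ : A ⊗[ℂ] (B ⊗[ℂ] C)) : ℕ :=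
  sInf {r | ∃ (a : Fin r → A) (b : Fin r → B) (c : Fin r → C),
    ψ = ∑ i, a i ⊗ₜ[ℂ] (b i ⊗ₜ[ℂ] c i)}

/-- ℂ⁴ with standard basis `e 0, e 1, e 2, e 3`. -/
abbrev Q4 : Type := Fin 4 → ℂ

noncomputable def e (i : Fin 4) : Q4 := Pi.single i 1

/-- Party-`p` index (in `Fin 4`, via `|i⟩=|i₀i₁⟩`, `|0⟩=|00⟩,|1⟩=|01⟩,|2⟩=|10⟩,|3⟩=|11⟩`)
of the summand of `W ⊗ W` in which copy 1 gives its excitation to party `f 0`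
and copy 2 to party `f 1`. -/
def idx (p : Fin 3) (f : Fin 2 → Fin 3) : Fin 4 :=
  2 * (if f 0 = p then 1 else 0) + (if f 1 = p then 1 else 0)

/-- `W ⊗ W`, regrouped party-wise as an element of `ℂ⁴ ⊗ ℂ⁴ ⊗ ℂ⁴`. -/
noncomputable def W2 : Q4 ⊗[ℂ] (Q4 ⊗[ℂ] Q4) :=
  ∑ f : Fin 2 → Fin 3, e (idx 0 f) ⊗ₜ[ℂ] (e (idx 1 f) ⊗ₜ[ℂ] e (idx 2 f))

noncomputable def ee (i j : Fin 4) : Q4 ⊗[ℂ] Q4 := e i ⊗ₜ[ℂ] e j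

/-- Contraction of `W ⊗ W` against a dual vector on party A. -/
noncomputable def contrA (f : Module.Dual ℂ Q4) : Q4 ⊗[ℂ] Q4 :=
  (TensorProduct.lid ℂ (Q4 ⊗[ℂ] Q4)) ((TensorProduct.map f LinearMap.id) W2)

/-!
Contracting `W2` against `f` gives `∑ₖ f(eₖ) • Sₖ`, where `Sₖ` is the slice of `W2` at
A-index `k`, so the span of the image is the span of the four slices. These are linearly
independent because contracting their first factor with `⟨0|` sends them to the distinct basis
vectors `|3⟩, |2⟩, |1⟩, |0⟩`.
-/

lemma span_range_sum_dual_smul {R V M ι : Type*} [CommSemiring R] [AddCommMonoid V]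
    [Module R V] [AddCommMonoid M] [Module R M] [Fintype ι] [DecidableEq ι]
    (b : Module.Basis ι R V) (w : ι → M) :
    Submodule.span R (Set.range fun f : Module.Dual R V => ∑ i, f (b i) • w i) =
      Submodule.span R (Set.range w) := by
  apply le_antisymm
  · rw [Submodule.span_le]
    rintro _ ⟨f, rfl⟩
    exact Submodule.sum_mem _ fun i _ => Submodule.smul_mem _ _ (Submodule.subset_span ⟨i, rfl⟩)
  · refine Submodule.span_mono ?_
    rintro _ ⟨i, rfl⟩
    refine ⟨b.coord i, ?_⟩
    simp [Finsupp.single_apply]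

lemma W2_eq : W2 =
    e 3 ⊗ₜ[ℂ] (e 0 ⊗ₜ[ℂ] e 0) + e 2 ⊗ₜ[ℂ] (e 1 ⊗ₜ[ℂ] e 0) + e 2 ⊗ₜ[ℂ] (e 0 ⊗ₜ[ℂ] e 1)
    + e 1 ⊗ₜ[ℂ] (e 2 ⊗ₜ[ℂ] e 0) + e 0 ⊗ₜ[ℂ] (e 3 ⊗ₜ[ℂ] e 0) + e 0 ⊗ₜ[ℂ] (e 2 ⊗ₜ[ℂ] e 1)
    + e 1 ⊗ₜ[ℂ] (e 0 ⊗ₜ[ℂ] e 2) + e 0 ⊗ₜ[ℂ] (e 1 ⊗ₜ[ℂ] e 2) + e 0 ⊗ₜ[ℂ] (e 0 ⊗ₜ[ℂ] e 3) := by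
  rw [W2, ← (piFinTwoEquiv fun _ => Fin 3).symm.sum_comp, Fintype.sum_prod_type]
  simp only [Fin.sum_univ_three]
  norm_num [idx]
  abel

lemma e_eq_basisFun : e = ⇑(Pi.basisFun ℂ (Fin 4)) :=
  funext fun i => (Pi.basisFun_apply ℂ (Fin 4) i).symm

noncomputable def sliceA : Fin 4 → Q4 ⊗[ℂ] Q4 :=
  ![ee 0 3 + ee 1 2 + ee 2 1 + ee 3 0, ee 0 2 + ee 2 0, ee 0 1 + ee 1 0, ee 0 0]

lemma contrA_eq_sum_sliceA (f : Module.Dual ℂ Q4) :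
    contrA f = ∑ k, f (e k) • sliceA k := by
  simp only [contrA, W2_eq, map_add, TensorProduct.map_tmul, LinearMap.id_coe, id_eq,
    TensorProduct.lid_tmul, Fin.sum_univ_four, sliceA, ee, Matrix.cons_val, smul_add]
  abel

lemma range_sliceA : Set.range sliceA = ({ee 0 0, ee 0 1 + ee 1 0, ee 0 2 + ee 2 0,
    ee 0 3 + ee 1 2 + ee 2 1 + ee 3 0} : Set (Q4 ⊗[ℂ] Q4)) := by
  ext x
  simp only [sliceA, Matrix.range_cons, Matrix.range_empty, Set.union_empty, Set.mem_union,
    Set.mem_singleton_iff, Set.mem_insert_iff]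
  tauto

lemma linearIndependent_sliceA : LinearIndependent ℂ sliceA := by
  let contractFirst : Q4 ⊗[ℂ] Q4 →ₗ[ℂ] Q4 :=
    (TensorProduct.lid ℂ Q4).toLinearMap ∘ₗ LinearMap.rTensor Q4 (LinearMap.proj 0)
  have contractFirst_ee : ∀ i j, contractFirst (ee i j) = (if i = 0 then 1 else 0 : ℂ) • e j := by
    intro i j
    simp [contractFirst, ee, e, Pi.single_apply, eq_comm]
  have hslices : contractFirst ∘ sliceA = e ∘ Fin.rev := by
    funext k
    fin_cases k <;> simp [sliceA, contractFirst_ee]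
  apply LinearIndependent.of_comp contractFirst
  rw [hslices, e_eq_basisFun]
  exact (Pi.basisFun ℂ (Fin 4)).linearIndependent.comp _ Fin.rev_injective

theorem image_contraction_W2 :
    Submodule.span ℂ (Set.range contrA) =
      Submodule.span ℂ ({ee 0 0, ee 0 1 + ee 1 0, ee 0 2 + ee 2 0,
        ee 0 3 + ee 1 2 + ee 2 1 + ee 3 0} : Set (Q4 ⊗[ℂ] Q4)) ∧
    Module.finrank ℂ (Submodule.span ℂ (Set.range contrA)) = 4 := by
  have hspan : Submodule.span ℂ (Set.range contrA) = Submodule.span ℂ (Set.range sliceA) := by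
    rw [show contrA = fun f => ∑ k, f (e k) • sliceA k from funext contrA_eq_sum_sliceA,
      e_eq_basisFun]
    exact span_range_sum_dual_smul _ _
  refine ⟨by rw [hspan, range_sliceA], ?_⟩
  rw [hspan, finrank_span_eq_card linearIndependent_sliceA, Fintype.card_fin]
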